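/- arXiv:1311.0198 — 3 statements merged into one kernel-verified Lean document; each statement's English description precedes it below -/
import Mathlib

section
/- The maximum social welfare over all feasible allocations equals the sum of the k largest elements of the combined multiset of all ask values and all bid values, where k is the number of asks. -/
/-- Extract the minimum-value unmatched ask from a list, with a fixed
tie-breaking rule (earlier list positions are preferred). Returns the
minimum together with the remaining list. -/
noncomputable def extractMin : List ℝ → Option (ℝ × List ℝ)
  | [] => none
  | a :: as =>
    match extractMin as with
    | none => some (a, [])
    | some (m, rest) => if a ≤ m then some (a, as) else some (m, a :: rest)

/-- State of the Best-first (greedy) allocation: the currently unmatched asks,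
the matched (ask, bid) pairs in match order, and the unmatched bids. -/
structure BfState where
  unmatchedAsks : List ℝ
  matched : List (ℝ × ℝ)
  unmatchedBids : List ℝ

/-- One step of the Best-first allocation: when bid `b` arrives, match it to the
minimum unmatched ask `a` if `a ≤ b`; otherwise leave `b` unmatched. -/
noncomputable def bfStep (s : BfState) (b : ℝ) : BfState :=
  match extractMin s.unmatchedAsks with
  | some (a, rest) =>
      if a ≤ b then ⟨rest, s.matched ++ [(a, b)], s.unmatchedBids⟩
      else ⟨s.unmatchedAsks, s.matched, s.unmatchedBids ++ [b]⟩
  | none => ⟨s.unmatchedAsks, s.matched, s.unmatchedBids ++ [b]⟩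

/-- Run the Best-first allocation on the bids in arrival order. -/
noncomputable def bfRun (asks bids : List ℝ) : BfState :=
  bids.foldl bfStep ⟨asks, [], []⟩

/-- Insertion into an ascending-sorted list. -/
noncomputable def insertAsc (x : ℝ) : List ℝ → List ℝ
  | [] => [x]
  | y :: ys => if x ≤ y then x :: y :: ys else y :: insertAsc x ys

/-- Sort a list of reals in ascending order. -/
noncomputable def sortAsc (l : List ℝ) : List ℝ := l.foldr insertAsc []

/-- Sort a list of reals in descending order. -/
noncomputable def sortDesc (l : List ℝ) : List ℝ := (sortAsc l).reverse

/-- Match the i-th element of the first list with the i-th element of the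
second, stopping as soon as a pair is not matchable (`a ≤ b` fails). -/
noncomputable def matchPrefix : List ℝ → List ℝ → List (ℝ × ℝ)
  | a :: as, b :: bs => if a ≤ b then (a, b) :: matchPrefix as bs else []
  | _, _ => []

/-- The optimal allocation: match the highest bid with the lowest ask, the
second highest bid with the second lowest ask, and so on, stopping as soon as
a pair is not matchable. -/
noncomputable def optPairs (asks bids : List ℝ) : List (ℝ × ℝ) :=
  matchPrefix (sortAsc asks) (sortDesc bids)

/-- A feasible allocation: a partial matching (multiset of (ask, bid) pairs)
using each ask and each bid at most once, with `a ≤ b` for every matched pair. -/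
def IsFeasible (asks bids : List ℝ) (M : Multiset (ℝ × ℝ)) : Prop :=
  M.map Prod.fst ≤ (asks : Multiset ℝ) ∧
  M.map Prod.snd ≤ (bids : Multiset ℝ) ∧
  ∀ p ∈ M, p.1 ≤ p.2

/-- Social welfare of an allocation: sum of matched bid values plus the sum of
the values of the unmatched asks. -/
noncomputable def welfare (asks : List ℝ) (M : Multiset (ℝ × ℝ)) : ℝ :=
  (M.map Prod.snd).sum + ((asks : Multiset ℝ) - M.map Prod.fst).sum

/-- Social welfare of the Best-first allocation. -/
noncomputable def bfWelfare (asks bids : List ℝ) : ℝ :=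
  ((bfRun asks bids).matched.map Prod.snd).sum + (bfRun asks bids).unmatchedAsks.sum

/-- Maximum social welfare over all feasible allocations. -/
noncomputable def OptW (asks bids : List ℝ) : ℝ :=
  sSup {w : ℝ | ∃ M : Multiset (ℝ × ℝ), IsFeasible asks bids M ∧ w = welfare asks M}

/-!
A feasible allocation leaves each ask with either its own value or the value of its bid, so its
welfare is the sum of a submultiset of `asks + bids` with `asks.length` elements; no such sum
exceeds that of the `asks.length` largest values `P`. Conversely, writing `asks + bids = P + Q`,
the asks in `Q` and the bids in `P` are equally many and each such ask is at most each such bid,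
so pairing them off arbitrarily is feasible and leaves exactly the values `P`.
-/

namespace Multiset

theorem exists_map_fst_eq_and_map_snd_eq {α β : Type*} {s : Multiset α} {t : Multiset β}
    (hcard : card s = card t) : ∃ M : Multiset (α × β), M.map Prod.fst = s ∧ M.map Prod.snd = t := by
  have hlen : s.toList.length = t.toList.length := by simpa using hcard
  refine ⟨s.toList.zip t.toList, ?_, ?_⟩
  · rw [map_coe, List.map_fst_zip hlen.le, coe_toList]
  · rw [map_coe, List.map_snd_zip hlen.ge, coe_toList]

variable {α : Type*} [AddCommMonoid α] [PartialOrder α] [IsOrderedAddMonoid α]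

theorem sum_le_sum_of_card_eq_of_forall_le {s t : Multiset α} (hcard : card s = card t)
    (hle : ∀ x ∈ s, ∀ y ∈ t, x ≤ y) : s.sum ≤ t.sum := by
  induction s using Multiset.induction_on generalizing t with
  | empty => simp [card_eq_zero.mp hcard.symm]
  | cons a s ih =>
    obtain ⟨b, hb⟩ : ∃ b, b ∈ t := card_pos_iff_exists_mem.mp (by simp [← hcard])
    obtain ⟨t, rfl⟩ := exists_cons_of_mem hb
    rw [sum_cons, sum_cons]
    refine add_le_add (hle a (mem_cons_self a s) b hb) (ih (by simpa using hcard) ?_)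
    exact fun x hx y hy ↦ hle x (mem_cons_of_mem hx) y (mem_cons_of_mem hy)

theorem sum_le_sum_of_le_add_of_card_eq [DecidableEq α] {P Q T : Multiset α}
    (hQP : ∀ y ∈ P, ∀ x ∈ Q, x ≤ y) (hT : T ≤ P + Q) (hcard : card T = card P) :
    T.sum ≤ P.sum := by
  have hT_split : T - P + T ∩ P = T := sub_add_inter T P
  have hP_split : P - T ∩ P + T ∩ P = P := tsub_add_cancel_of_le inter_le_right
  have hTQ : T - P ≤ Q := tsub_le_iff_left.mpr hT
  have hcard_rest : card (T - P) = card (P - T ∩ P) := by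
    have h₁ := congrArg card hT_split
    have h₂ := congrArg card hP_split
    rw [card_add] at h₁ h₂
    omega
  have hrest : (T - P).sum ≤ (P - T ∩ P).sum :=
    sum_le_sum_of_card_eq_of_forall_le hcard_rest fun x hx y hy ↦
      hQP y (mem_of_le tsub_le_self hy) x (mem_of_le hTQ hx)
  calc T.sum = (T - P).sum + (T ∩ P).sum := by rw [← sum_add, hT_split]
    _ ≤ (P - T ∩ P).sum + (T ∩ P).sum := add_le_add_left hrest _
    _ = P.sum := by rw [← sum_add, hP_split]

end Multiset

theorem List.Pairwise.le_of_mem_take_of_mem_drop {α : Type*} [Preorder α] {l : List α}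
    (hl : l.Pairwise (· ≥ ·)) (k : ℕ) : ∀ y ∈ l.take k, ∀ x ∈ l.drop k, x ≤ y := by
  rw [← List.take_append_drop k l, List.pairwise_append] at hl
  exact hl.2.2

theorem sortAsc_eq_insertionSort (l : List ℝ) : sortAsc l = l.insertionSort (· ≤ ·) := by
  have hinsert (x : ℝ) (l : List ℝ) : insertAsc x l = l.orderedInsert (· ≤ ·) x := by
    induction l with
    | nil => rfl
    | cons y ys ih => simp [insertAsc, ih]
  induction l with
  | nil => rfl
  | cons x xs ih => rw [List.insertionSort_cons, ← ih, ← hinsert]; rfl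

theorem sortDesc_perm (l : List ℝ) : (sortDesc l).Perm l := by
  rw [sortDesc, sortAsc_eq_insertionSort]
  exact (List.reverse_perm _).trans (List.perm_insertionSort _ l)

theorem sortDesc_pairwise_ge (l : List ℝ) : (sortDesc l).Pairwise (· ≥ ·) := by
  rw [sortDesc, sortAsc_eq_insertionSort, List.pairwise_reverse]
  exact List.pairwise_insertionSort _ l

noncomputable def welfareValues (asks : List ℝ) (M : Multiset (ℝ × ℝ)) : Multiset ℝ :=
  M.map Prod.snd + ((asks : Multiset ℝ) - M.map Prod.fst)

theorem welfare_eq_sum_welfareValues (asks : List ℝ) (M : Multiset (ℝ × ℝ)) :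
    welfare asks M = (welfareValues asks M).sum :=
  (Multiset.sum_add _ _).symm

section Welfare

variable {asks bids : List ℝ} {M : Multiset (ℝ × ℝ)}

theorem IsFeasible.card_welfareValues (hM : IsFeasible asks bids M) :
    Multiset.card (welfareValues asks M) = asks.length := by
  have hcard : Multiset.card M ≤ asks.length := by simpa using Multiset.card_le_card hM.1
  rw [welfareValues, Multiset.card_add, Multiset.card_sub hM.1, Multiset.card_map,
    Multiset.card_map, Multiset.coe_card]
  omega

theorem IsFeasible.welfareValues_le (hM : IsFeasible asks bids M) :
    welfareValues asks M ≤ (asks : Multiset ℝ) + bids :=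
  add_comm (asks : Multiset ℝ) bids ▸ add_le_add hM.2.1 tsub_le_self

variable {P Q : Multiset ℝ}

theorem IsFeasible.welfare_le (hM : IsFeasible asks bids M) (hPQ : (asks : Multiset ℝ) + bids = P + Q)
    (hQP : ∀ y ∈ P, ∀ x ∈ Q, x ≤ y) (hcard : Multiset.card P = asks.length) :
    welfare asks M ≤ P.sum := by
  rw [welfare_eq_sum_welfareValues]
  exact Multiset.sum_le_sum_of_le_add_of_card_eq hQP (hPQ ▸ hM.welfareValues_le)
    (hM.card_welfareValues.trans hcard.symm)

/-- The optimal allocation pairs the asks outside the top values `P` with the bids inside it. -/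
theorem exists_isFeasible_welfare_eq (hPQ : (asks : Multiset ℝ) + bids = P + Q)
    (hQP : ∀ y ∈ P, ∀ x ∈ Q, x ≤ y) (hcard : Multiset.card P = asks.length) :
    ∃ M, IsFeasible asks bids M ∧ welfare asks M = P.sum := by
  classical
  set A : Multiset ℝ := ↑asks
  have hasks_split : A - P + A ∩ P = A := Multiset.sub_add_inter A P
  have hP_split : P - A + A ∩ P = P := Multiset.inter_comm A P ▸ Multiset.sub_add_inter P A
  have hcard_eq : Multiset.card (A - P) = Multiset.card (P - A) := by
    have h₁ := congrArg Multiset.card hasks_split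
    have h₂ := congrArg Multiset.card hP_split
    have hA : Multiset.card A = asks.length := Multiset.coe_card asks
    rw [Multiset.card_add] at h₁ h₂
    omega
  have hasks_le : A - P ≤ Q := tsub_le_iff_left.mpr (hPQ ▸ Multiset.le_add_right A bids)
  have hbids_le : P - A ≤ bids := tsub_le_iff_left.mpr (hPQ ▸ Multiset.le_add_right P Q)
  obtain ⟨M, hfst, hsnd⟩ := Multiset.exists_map_fst_eq_and_map_snd_eq hcard_eq
  refine ⟨M, ⟨hfst ▸ tsub_le_self, hsnd ▸ hbids_le, fun p hp ↦ ?_⟩, ?_⟩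
  · have hask : p.1 ∈ A - P := hfst ▸ Multiset.mem_map_of_mem Prod.fst hp
    have hbid : p.2 ∈ P - A := hsnd ▸ Multiset.mem_map_of_mem Prod.snd hp
    exact hQP p.2 (Multiset.mem_of_le tsub_le_self hbid) p.1 (Multiset.mem_of_le hasks_le hask)
  · rw [welfare_eq_sum_welfareValues, welfareValues, hfst, hsnd]
    change (P - A + (A - (A - P))).sum = P.sum
    rw [tsub_eq_of_eq_add_rev hasks_split.symm, hP_split]

end Welfare

theorem optimal_welfare_eq_topK_general (asks bids : List ℝ) :
    IsGreatest {w : ℝ | ∃ M : Multiset (ℝ × ℝ), IsFeasible asks bids M ∧ w = welfare asks M}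
      (((sortDesc (asks ++ bids)).take asks.length).sum) := by
  set D := sortDesc (asks ++ bids)
  set P : Multiset ℝ := ↑(D.take asks.length)
  set Q : Multiset ℝ := ↑(D.drop asks.length)
  have hPQ : (asks : Multiset ℝ) + bids = P + Q := by
    rw [Multiset.coe_add, Multiset.coe_add, List.take_append_drop, Multiset.coe_eq_coe]
    exact (sortDesc_perm _).symm
  have hQP : ∀ y ∈ P, ∀ x ∈ Q, x ≤ y :=
    (sortDesc_pairwise_ge _).le_of_mem_take_of_mem_drop asks.length
  have hcard : Multiset.card P = asks.length := by
    simp [P, D, (sortDesc_perm _).length_eq]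
  rw [← Multiset.sum_coe]
  refine ⟨?_, fun w ⟨M, hM, hw⟩ ↦ hw ▸ hM.welfare_le hPQ hQP hcard⟩
  obtain ⟨M, hM, hw⟩ := exists_isFeasible_welfare_eq hPQ hQP hcard
  exact ⟨M, hM, hw.symm⟩

/-- The maximum social welfare over all feasible allocations
equals the sum of the `k` largest elements of the combined multiset of ask and
bid values, where `k` is the number of asks. -/
theorem optimal_welfare_eq_topK (asks bids : List ℝ)
    (ha : ∀ a ∈ asks, 0 ≤ a) (hb : ∀ b ∈ bids, 0 ≤ b) :
    IsGreatest {w : ℝ | ∃ M : Multiset (ℝ × ℝ), IsFeasible asks bids M ∧ w = welfare asks M}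
      (((sortDesc (asks ++ bids)).take asks.length).sum) :=
  optimal_welfare_eq_topK_general asks bids
end

section
/- The Best-first allocation is monotone for sellers: fixing the bids, their arrival order, and the other asks, if a seller's ask is matched when reported with value v, then it is also matched when reported with any value v′ with 0 ≤ v′ ≤ v. -/
/-- An ask: a (value, seller id) pair. -/
abbrev Ask := ℝ × ℕ

/-- Extract the minimum-value unmatched ask, with a fixed tie-breaking rule
(earlier list positions are preferred). -/
noncomputable def extractMinA : List Ask → Option (Ask × List Ask)
  | [] => none
  | a :: as =>
    match extractMinA as with
    | none => some (a, [])
    | some (m, rest) => if a.1 ≤ m.1 then some (a, as) else some (m, a :: rest)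

/-- State of the Best-first (greedy) allocation with identified asks. -/
structure BfStateA where
  unmatchedAsks : List Ask
  matched : List (Ask × ℝ)
  unmatchedBids : List ℝ

/-- One step of the Best-first allocation: when bid `b` arrives, match it to
the minimum-value unmatched ask `a` if `a.1 ≤ b`; otherwise `b` stays unmatched. -/
noncomputable def bfStepA (s : BfStateA) (b : ℝ) : BfStateA :=
  match extractMinA s.unmatchedAsks with
  | some (a, rest) =>
      if a.1 ≤ b then ⟨rest, s.matched ++ [(a, b)], s.unmatchedBids⟩
      else ⟨s.unmatchedAsks, s.matched, s.unmatchedBids ++ [b]⟩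
  | none => ⟨s.unmatchedAsks, s.matched, s.unmatchedBids ++ [b]⟩

/-- Run the Best-first allocation on the bids in arrival order. -/
noncomputable def bfRunA (asks : List Ask) (bids : List ℝ) : BfStateA :=
  bids.foldl bfStepA ⟨asks, [], []⟩

/-- The ask of seller `id` is matched. -/
def askMatched (st : BfStateA) (id : ℕ) : Prop := ∃ p ∈ st.matched, p.1.2 = id

/-- Highest value among the unmatched bids (0 if there is none). -/
noncomputable def maxBid (l : List ℝ) : ℝ := l.foldr max 0

/-- The `j`-th matched pair is reachable from the last matched pair:
for every `j ≤ m < last`, the `(m+1)`-st matched ask and the `m`-th matched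
bid are matchable. -/
def ReachableFromLast (m : List (Ask × ℝ)) (j : ℕ) : Prop :=
  ∀ i, j ≤ i → i + 1 < m.length → (m.getD (i + 1) default).1.1 ≤ (m.getD i default).2

open scoped Classical in
/-- Payment of the seller whose pair is the `j`-th matched pair:
`min(v(ā_min), max(v(b_last), v(b̄_max)))` if her pair is reachable from the
last matched pair, and `max(v(a_last), v(b̄_max))` otherwise (`v(ā_min) = +∞`
if there is no unmatched ask, handled by dropping the `min`;
`v(b̄_max) = 0` if there is no unmatched bid). -/
noncomputable def sellerPayAt (st : BfStateA) (j : ℕ) : ℝ :=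
  let m := st.matched
  let blast : ℝ := ((m.getLast?).map Prod.snd).getD 0
  let alast : ℝ := ((m.getLast?).map (fun p => p.1.1)).getD 0
  let bmax : ℝ := maxBid st.unmatchedBids
  if ReachableFromLast m j then
    match extractMinA st.unmatchedAsks with
    | some (amin, _) => min amin.1 (max blast bmax)
    | none => max blast bmax
  else max alast bmax

/-- Payment received by seller `id` (0 if her ask is unmatched). -/
noncomputable def sellerPay (st : BfStateA) (id : ℕ) : ℝ :=
  match st.matched.findIdx? (fun p => p.1.2 == id) with
  | some j => sellerPayAt st j
  | none => 0

open scoped Classical in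
/-- Utility of seller `id` with true value `trueV` in `M_greedy`. -/
noncomputable def sellerUtil (asks : List Ask) (bids : List ℝ) (id : ℕ) (trueV : ℝ) : ℝ :=
  let st := bfRunA asks bids
  if askMatched st id then sellerPay st id - trueV else 0

/-- Insert an ask at a given position of the ask list. -/
def insertAskAt (l : List Ask) (pos : ℕ) (x : Ask) : List Ask :=
  l.take pos ++ x :: l.drop pos

/-!
Lowering one ask changes the Best-first run only from the moment that ask is
extracted under its lowered value. Until then both runs extract the same asks at
the same bids, so their matched lists coincide. At the first bid where the
lowered ask is the minimum, either it is matched, or that bid is below every ask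
of both runs and neither run changes. Hence, if the original ask is ever matched,
so is the lowered one.
-/

lemma eq_nil_of_extractMinA_eq_none {l : List Ask} (h : extractMinA l = none) : l = [] := by
  cases l with
  | nil => rfl
  | cons a as =>
    rw [extractMinA] at h
    split at h
    · simp at h
    · split at h <;> simp at h

lemma extractMinA_cons_of_eq_some (a : Ask) {as : List Ask} {m : Ask} {r : List Ask}
    (h : extractMinA as = some (m, r)) :
    extractMinA (a :: as) = if a.1 ≤ m.1 then some (a, as) else some (m, a :: r) := by
  rw [extractMinA, h]

lemma extractMinA_lower {x x' : Ask} (hx : x'.1 ≤ x.1) (t₁ t₂ : List Ask) :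
    (extractMinA (t₁ ++ x' :: t₂) = some (x', t₁ ++ t₂) ∧
      ∃ m r, extractMinA (t₁ ++ x :: t₂) = some (m, r) ∧ x'.1 ≤ m.1) ∨
    ∃ m r₁ r₂, extractMinA (t₁ ++ x' :: t₂) = some (m, r₁ ++ x' :: r₂) ∧
      extractMinA (t₁ ++ x :: t₂) = some (m, r₁ ++ x :: r₂) := by
  induction t₁ with
  | nil =>
    rcases h : extractMinA t₂ with _ | ⟨m, r⟩
    · obtain rfl := eq_nil_of_extractMinA_eq_none h
      exact Or.inl ⟨rfl, x, [], rfl, hx⟩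
    · simp only [List.nil_append, extractMinA_cons_of_eq_some _ h]
      by_cases hx'm : x'.1 ≤ m.1
      · refine Or.inl ⟨by simp [hx'm], ?_⟩
        split_ifs
        exacts [⟨x, t₂, rfl, hx⟩, ⟨m, x :: r, rfl, hx'm⟩]
      · have hxm : ¬ x.1 ≤ m.1 := fun h' => hx'm (hx.trans h')
        exact Or.inr ⟨m, [], r, by simp [hx'm], by simp [hxm]⟩
  | cons a t ih =>
    simp only [List.cons_append]
    rcases ih with ⟨h', m, r, h, hx'm⟩ | ⟨m, r₁, r₂, h', h⟩
    · rw [extractMinA_cons_of_eq_some a h', extractMinA_cons_of_eq_some a h]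
      by_cases hax' : a.1 ≤ x'.1
      · exact Or.inr ⟨a, t, t₂, by simp [hax'], by simp [hax'.trans hx'm]⟩
      · refine Or.inl ⟨by simp [hax'], ?_⟩
        split_ifs
        exacts [⟨a, _, rfl, le_of_not_ge hax'⟩, ⟨m, a :: r, rfl, hx'm⟩]
    · rw [extractMinA_cons_of_eq_some a h', extractMinA_cons_of_eq_some a h]
      split_ifs
      exacts [Or.inr ⟨a, t, t₂, rfl, rfl⟩, Or.inr ⟨m, a :: r₁, r₂, rfl, rfl⟩]

lemma bfStepA_of_extractMinA_eq_some {s : BfStateA} {a : Ask} {rest : List Ask}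
    (h : extractMinA s.unmatchedAsks = some (a, rest)) (b : ℝ) :
    bfStepA s b = if a.1 ≤ b then ⟨rest, s.matched ++ [(a, b)], s.unmatchedBids⟩
      else ⟨s.unmatchedAsks, s.matched, s.unmatchedBids ++ [b]⟩ := by
  rw [bfStepA, h]

lemma askMatched_bfStepA {s : BfStateA} {id : ℕ} (h : askMatched s id) (b : ℝ) :
    askMatched (bfStepA s b) id := by
  obtain ⟨p, hp, rfl⟩ := h
  unfold bfStepA
  split
  · split
    exacts [⟨p, List.mem_append_left _ hp, rfl⟩, ⟨p, hp, rfl⟩]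
  · exact ⟨p, hp, rfl⟩

def AskReplaced (x x' : Ask) (s s' : BfStateA) : Prop :=
  s'.matched = s.matched ∧
    ∃ t₁ t₂, s.unmatchedAsks = t₁ ++ x :: t₂ ∧ s'.unmatchedAsks = t₁ ++ x' :: t₂

section Lowering

variable {x x' : Ask} (hx : x'.1 ≤ x.1)
include hx

lemma bfStepA_askReplaced {s s' : BfStateA} (h : AskReplaced x x' s s') (b : ℝ) :
    askMatched (bfStepA s' b) x'.2 ∨ AskReplaced x x' (bfStepA s b) (bfStepA s' b) := by
  obtain ⟨hmatched, t₁, t₂, hs, hs'⟩ := h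
  rcases extractMinA_lower hx t₁ t₂ with ⟨h', m, r, h, hx'm⟩ | ⟨m, r₁, r₂, h', h⟩
  · rw [← hs'] at h'
    rw [← hs] at h
    rw [bfStepA_of_extractMinA_eq_some h', bfStepA_of_extractMinA_eq_some h]
    by_cases hb : x'.1 ≤ b
    · exact Or.inl ⟨(x', b), by simp [hb]⟩
    · have hmb : ¬ m.1 ≤ b := fun h'' => hb (hx'm.trans h'')
      exact Or.inr ⟨by simp [hb, hmb, hmatched], t₁, t₂, by simp [hmb, hs], by simp [hb, hs']⟩
  · rw [← hs'] at h'
    rw [← hs] at h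
    rw [bfStepA_of_extractMinA_eq_some h', bfStepA_of_extractMinA_eq_some h]
    refine Or.inr ?_
    split_ifs
    exacts [⟨by simp [hmatched], r₁, r₂, rfl, rfl⟩, ⟨hmatched, t₁, t₂, hs, hs'⟩]

lemma foldl_bfStepA_askReplaced (bids : List ℝ) {s s' : BfStateA}
    (h : askMatched s' x'.2 ∨ AskReplaced x x' s s') :
    askMatched (bids.foldl bfStepA s') x'.2 ∨
      AskReplaced x x' (bids.foldl bfStepA s) (bids.foldl bfStepA s') := by
  induction bids generalizing s s' with
  | nil => exact h
  | cons b bids ih =>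
    refine ih ?_
    rcases h with h | h
    exacts [Or.inl (askMatched_bfStepA h b), bfStepA_askReplaced hx h b]

end Lowering

theorem bf_seller_monotone_general (bids : List ℝ) (otherAsks : List Ask)
    (pos myId : ℕ)
    (v v' : ℝ) (hvv : v' ≤ v)
    (hmatched : askMatched (bfRunA (insertAskAt otherAsks pos (v, myId)) bids) myId) :
    askMatched (bfRunA (insertAskAt otherAsks pos (v', myId)) bids) myId := by
  have hinit : AskReplaced (v, myId) (v', myId) ⟨insertAskAt otherAsks pos (v, myId), [], []⟩
      ⟨insertAskAt otherAsks pos (v', myId), [], []⟩ :=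
    ⟨rfl, otherAsks.take pos, otherAsks.drop pos, rfl, rfl⟩
  rcases foldl_bfStepA_askReplaced hvv bids (Or.inr hinit) with h | ⟨hsame, _⟩
  · exact h
  · simpa only [askMatched, bfRunA, hsame] using hmatched

/-- The Best-first allocation is monotone for sellers:
fixing the bids, the other asks, and her ask's position, if a seller's ask is
matched when reported with value `v`, then it is also matched when reported
with any value `v'` with `0 ≤ v' ≤ v`. -/
theorem bf_seller_monotone (bids : List ℝ) (otherAsks : List Ask)
    (pos myId : ℕ) (hid : ∀ p ∈ otherAsks, p.2 ≠ myId)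
    (hb : ∀ b ∈ bids, 0 ≤ b) (ha : ∀ p ∈ otherAsks, 0 ≤ p.1)
    (v v' : ℝ) (hv' : 0 ≤ v') (hvv : v' ≤ v)
    (hmatched : askMatched (bfRunA (insertAskAt otherAsks pos (v, myId)) bids) myId) :
    askMatched (bfRunA (insertAskAt otherAsks pos (v', myId)) bids) myId :=
  bf_seller_monotone_general bids otherAsks pos myId v v' hvv hmatched
end

section
/- Post-processing a one-sided winner selection never loses welfare: let k be the number of asks and let Sel be any set of at most k elements of the combined collection of asks and bids (the winners selected by a one-sided auction). Process the selected bids one at a time in a fixed order, matching each selected bid b to the lowest-value currently unmatched ask a if a ≤ b and leaving b unmatched otherwise. Then the resulting social welfare (the sum of the values of the matched bids plus the sum of the values of the asks that remain unmatched) is at least the total value of all elements of Sel. -/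
/-! Best-first processing keeps every ask it has matched, and every bid it has left unmatched,
below every ask that is still unmatched. The welfare counts the matched bids and the unmatched
asks `R`, so it suffices that the selected asks plus the unmatched bids weigh at most `R`. Selected
asks lying in `R` pay for themselves; the other selected asks have been matched, and together with
the unmatched bids they are, by the cardinality bound, no more numerous than the rest of `R`, each
element of which dominates them and is nonnegative. -/

lemma extractMin_eq_none {l : List ℝ} (h : extractMin l = none) : l = [] := by
  cases l with
  | nil => rfl
  | cons a as =>
    simp only [extractMin] at h
    split at h <;> [simp at h; split_ifs at h]

lemma extractMin_eq_some {l : List ℝ} {m : ℝ} {rest : List ℝ}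
    (h : extractMin l = some (m, rest)) :
    (l : Multiset ℝ) = m ::ₘ rest ∧ ∀ x ∈ l, m ≤ x := by
  induction l generalizing m rest with
  | nil => simp [extractMin] at h
  | cons a as ih =>
    simp only [extractMin] at h
    split at h
    next hnone =>
      obtain ⟨rfl, rfl⟩ := Prod.mk.inj (Option.some.inj h)
      simp [extractMin_eq_none hnone]
    next m' rest' hsome =>
      obtain ⟨hperm, hmin⟩ := ih hsome
      split_ifs at h with ham <;> obtain ⟨rfl, rfl⟩ := Prod.mk.inj (Option.some.inj h)
      · exact ⟨rfl, by simpa using fun x hx => ham.trans (hmin x hx)⟩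
      · refine ⟨by rw [← Multiset.cons_coe, hperm, Multiset.cons_swap]; rfl, ?_⟩
        simpa [(not_le.mp ham).le] using hmin

namespace BfState

structure Invariant (asks bids : Multiset ℝ) (s : BfState) : Prop where
  asks_eq : ((s.matched.map Prod.fst : List ℝ) : Multiset ℝ) + s.unmatchedAsks = asks
  bids_eq : ((s.matched.map Prod.snd : List ℝ) : Multiset ℝ) + s.unmatchedBids = bids
  matchedAsk_le : ∀ a ∈ s.matched.map Prod.fst, ∀ r ∈ s.unmatchedAsks, a ≤ r
  unmatchedBid_le : ∀ b ∈ s.unmatchedBids, ∀ r ∈ s.unmatchedAsks, b ≤ r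

lemma Invariant.bfStep {asks bids : Multiset ℝ} {s : BfState} (h : s.Invariant asks bids)
    (b : ℝ) : (bfStep s b).Invariant asks (b ::ₘ bids) := by
  have leaveUnmatched (hb : ∀ r ∈ s.unmatchedAsks, b ≤ r) :
      Invariant asks (b ::ₘ bids) ⟨s.unmatchedAsks, s.matched, s.unmatchedBids ++ [b]⟩ :=
    { asks_eq := h.asks_eq
      bids_eq := by rw [← h.bids_eq]; simp [add_comm]
      matchedAsk_le := h.matchedAsk_le
      unmatchedBid_le := by
        simpa [or_imp, forall_and] using ⟨h.unmatchedBid_le, hb⟩ }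
  unfold _root_.bfStep
  split
  next a rest hext =>
    obtain ⟨hperm, hmin⟩ := extractMin_eq_some hext
    have mem_rest {r} (hr : r ∈ rest) : r ∈ s.unmatchedAsks := by
      rw [← Multiset.mem_coe, hperm]; exact Multiset.mem_cons_of_mem hr
    split_ifs with hab
    · exact
        { asks_eq := by
            rw [← h.asks_eq, hperm, List.map_append, ← Multiset.coe_add]
            simp [add_comm]
          bids_eq := by
            rw [← h.bids_eq, List.map_append, ← Multiset.coe_add]
            simp [add_comm]
          matchedAsk_le := by
            simp only [List.map_append, List.map_singleton, List.mem_append, List.mem_singleton]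
            rintro a' (ha' | rfl) r hr
            exacts [h.matchedAsk_le a' ha' r (mem_rest hr), hmin r (mem_rest hr)]
          unmatchedBid_le := fun b' hb' r hr => h.unmatchedBid_le b' hb' r (mem_rest hr) }
    · exact leaveUnmatched fun r hr => (not_le.mp hab).le.trans (hmin r hr)
  next hnone =>
    exact leaveUnmatched (by simp [extractMin_eq_none hnone])

lemma Invariant.foldl_bfStep {asks bids : Multiset ℝ} {s : BfState} (h : s.Invariant asks bids)
    (l : List ℝ) : (l.foldl _root_.bfStep s).Invariant asks (bids + l) := by
  induction l generalizing bids s with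
  | nil => simpa using h
  | cons b l ih =>
    rw [List.foldl_cons, ← Multiset.cons_coe, Multiset.add_cons, ← Multiset.cons_add]
    exact ih (h.bfStep b)

lemma invariant_bfRun (asks bids : List ℝ) : (bfRun asks bids).Invariant asks bids := by
  simpa [bfRun] using Invariant.foldl_bfStep (asks := asks) (bids := 0) (s := ⟨asks, [], []⟩)
    ⟨by simp, by simp, by simp, by simp⟩ bids

end BfState

namespace Multiset

variable {α : Type*} [AddCommMonoid α]

lemma sum_le_sum_of_forall_le_of_card_le [PartialOrder α] [IsOrderedAddMonoid α]
    {s t : Multiset α} (hcard : card s ≤ card t) (hst : ∀ x ∈ s, ∀ y ∈ t, x ≤ y)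
    (ht : ∀ y ∈ t, 0 ≤ y) : s.sum ≤ t.sum := by
  classical
  induction s using Multiset.induction generalizing t with
  | empty => simpa using sum_nonneg ht
  | cons x s ih =>
    obtain ⟨y, hy⟩ := card_pos_iff_exists_mem.mp (lt_of_lt_of_le (by simp) hcard)
    rw [← cons_erase hy, sum_cons, sum_cons]
    refine add_le_add (hst x (mem_cons_self x s) y hy) (ih ?_ ?_ ?_)
    · rw [card_cons, ← card_erase_add_one hy] at hcard
      omega
    · exact fun x' hx' y' hy' => hst x' (mem_cons_of_mem hx') y' (mem_of_mem_erase hy')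
    · exact fun y' hy' => ht y' (mem_of_mem_erase hy')

lemma sum_add_sum_le_sum_of_le_add [LinearOrder α] [IsOrderedAddMonoid α]
    {m r s u : Multiset α} (hs : s ≤ m + r) (hcard : card s + card u ≤ card r)
    (hm : ∀ x ∈ m, ∀ y ∈ r, x ≤ y) (hu : ∀ x ∈ u, ∀ y ∈ r, x ≤ y) (hr : ∀ y ∈ r, 0 ≤ y) :
    s.sum + u.sum ≤ r.sum := by
  have hsm : s - r ≤ m := by rwa [Multiset.sub_le_iff_le_add]
  have hsr : s ∩ r ≤ r := inter_le_right
  have hcard' : card (s - r) + card u ≤ card (r - s ∩ r) := by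
    have := congrArg card (sub_add_inter s r)
    rw [card_add] at this
    rw [card_sub hsr]
    omega
  have mem_r {y} (hy : y ∈ r - s ∩ r) : y ∈ r := mem_of_le (Multiset.sub_le_self _ _) hy
  have key : (s - r + u).sum ≤ (r - s ∩ r).sum := by
    refine sum_le_sum_of_forall_le_of_card_le (by rwa [card_add]) ?_ fun y hy => hr y (mem_r hy)
    intro x hx y hy
    rcases mem_add.mp hx with hx | hx
    exacts [hm x (mem_of_le hsm hx) y (mem_r hy), hu x hx y (mem_r hy)]
  calc s.sum + u.sum = (s - r + u).sum + (s ∩ r).sum := by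
        conv_lhs => rw [← sub_add_inter s r, sum_add]
        rw [sum_add, add_right_comm]
    _ ≤ (r - s ∩ r).sum + (s ∩ r).sum := by gcongr
    _ = r.sum := by rw [← sum_add, tsub_add_cancel_of_le hsr]

end Multiset

theorem postprocessing_welfare_ge_selection_general (asks selBids : List ℝ)
    (selAsks : Multiset ℝ)
    (ha : ∀ a ∈ asks, 0 ≤ a)
    (hselA : selAsks ≤ (asks : Multiset ℝ))
    (hcard : Multiset.card selAsks + selBids.length ≤ asks.length) :
    selAsks.sum + selBids.sum ≤ bfWelfare asks selBids := by
  obtain ⟨hasks, hbids, hmatched, hunmatched⟩ := BfState.invariant_bfRun asks selBids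
  set s := bfRun asks selBids
  have hcard' : Multiset.card selAsks + s.unmatchedBids.length ≤ s.unmatchedAsks.length := by
    have hA := congrArg Multiset.card hasks
    have hB := congrArg Multiset.card hbids
    simp only [Multiset.card_add, Multiset.coe_card, List.length_map] at hA hB
    omega
  have hnonneg (r) (hr : r ∈ s.unmatchedAsks) : 0 ≤ r :=
    ha r (by rw [← Multiset.mem_coe, ← hasks]; exact Multiset.mem_add.mpr (Or.inr hr))
  have key := Multiset.sum_add_sum_le_sum_of_le_add (u := s.unmatchedBids) (hasks ▸ hselA) hcard'
    hmatched hunmatched hnonneg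
  calc selAsks.sum + selBids.sum
      = selAsks.sum + s.unmatchedBids.sum + (s.matched.map Prod.snd).sum := by
        rw [← Multiset.sum_coe selBids, ← hbids, Multiset.sum_add, Multiset.sum_coe, Multiset.sum_coe]
        ring
    _ ≤ s.unmatchedAsks.sum + (s.matched.map Prod.snd).sum := by gcongr; simpa using key
    _ = bfWelfare asks selBids := add_comm _ _

/-- Post-processing a one-sided winner selection never loses
welfare: let `k` be the number of asks and let the selection consist of asks
`selAsks` and bids `selBids` (at most `k` elements in total, drawn from the
combined collection). Processing the selected bids in order, matching each to
the lowest-value currently unmatched ask `a` whenever `a ≤ b`, yields social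
welfare at least the total value of the selection. -/
theorem postprocessing_welfare_ge_selection (asks bids selBids : List ℝ)
    (selAsks : Multiset ℝ)
    (ha : ∀ a ∈ asks, 0 ≤ a) (hb : ∀ b ∈ bids, 0 ≤ b)
    (hselA : selAsks ≤ (asks : Multiset ℝ))
    (hselB : (selBids : Multiset ℝ) ≤ (bids : Multiset ℝ))
    (hcard : Multiset.card selAsks + selBids.length ≤ asks.length) :
    selAsks.sum + selBids.sum ≤ bfWelfare asks selBids :=
  postprocessing_welfare_ge_selection_general asks selBids selAsks ha hselA hcard
end
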